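/- arXiv:1911.10004 — 6 statements merged into one kernel-verified Lean document; each statement's English description precedes it below -/
import Mathlib

section
/- If two coarse structures E and E' on the same set X induce the same linkness relation, then they have the same bounded sets. -/
open Set

/-- A coarse structure (ballean) on a set `X`. -/
structure CoarseStruct (X : Type*) where
  sets : Set (Set (X × X))
  diagonal_mem : Set.diagonal X ∈ sets
  diagonal_subset : ∀ E ∈ sets, Set.diagonal X ⊆ E
  comp_mem : ∀ E ∈ sets, ∀ F ∈ sets,
    {p : X × X | ∃ z, (p.1, z) ∈ E ∧ (z, p.2) ∈ F} ∈ sets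
  inv_mem : ∀ E ∈ sets, {p : X × X | (p.2, p.1) ∈ E} ∈ sets
  subset_mem : ∀ E ∈ sets, ∀ E' : Set (X × X),
    Set.diagonal X ⊆ E' → E' ⊆ E → E' ∈ sets
  cover : ∀ p : X × X, ∃ E ∈ sets, p ∈ E

namespace CoarseStruct

variable {X : Type*}

/-- The ball `E[A]` of radius `E` around `A`. -/
def ball (E : Set (X × X)) (A : Set X) : Set X := {y | ∃ a ∈ A, (a, y) ∈ E}

/-- A set is bounded if it is contained in a ball around a point. -/
def IsBounded (C : CoarseStruct X) (B : Set X) : Prop :=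
  ∃ E ∈ C.sets, ∃ x : X, B ⊆ ball E {x}

/-- Closeness: `A δ B`. -/
def Close (C : CoarseStruct X) (A B : Set X) : Prop :=
  ∃ E ∈ C.sets, A ⊆ ball E B ∧ B ⊆ ball E A

/-- Linkness: `A λ B`. -/
def Linked (C : CoarseStruct X) (A B : Set X) : Prop :=
  (C.IsBounded A ∧ C.IsBounded B) ∨
  ∃ A' B' : Set X, A' ⊆ A ∧ B' ⊆ B ∧ ¬C.IsBounded A' ∧ ¬C.IsBounded B' ∧ C.Close A' B'

def LambdaEquiv (C C' : CoarseStruct X) : Prop :=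
  ∀ A B : Set X, C.Linked A B ↔ C'.Linked A B

def DeltaEquiv (C C' : CoarseStruct X) : Prop :=
  ∀ A B : Set X, C.Close A B ↔ C'.Close A B

def Discrete (C : CoarseStruct X) : Prop :=
  ∀ E ∈ C.sets, ∃ B : Set X, C.IsBounded B ∧ ∀ x ∉ B, ball E {x} = {x}

def Large (C : CoarseStruct X) (Y : Set X) : Prop :=
  ∃ E ∈ C.sets, ball E Y = Set.univ

/-- The subballean on `Y` is discrete. -/
def DiscreteOn (C : CoarseStruct X) (Y : Set X) : Prop :=
  ∀ E ∈ C.sets, ∃ B : Set X, C.IsBounded B ∧ ∀ y ∈ Y \ B, ball E {y} ∩ Y = {y}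

def CoarselyDiscrete (C : CoarseStruct X) : Prop :=
  ∃ Y : Set X, C.Large Y ∧ C.DiscreteOn Y

def LambdaRigid (C : CoarseStruct X) : Prop :=
  ∀ C' : CoarseStruct X, LambdaEquiv C C' → C' = C

def DeltaRigid (C : CoarseStruct X) : Prop :=
  ∀ C' : CoarseStruct X, DeltaEquiv C C' → C' = C

def IsBase (C : CoarseStruct X) (B : Set (Set (X × X))) : Prop :=
  B ⊆ C.sets ∧ ∀ E ∈ C.sets, ∃ E' ∈ B, E ⊆ E'

/-- Metrizable: the coarse structure has a countable base. -/
def Metrizable (C : CoarseStruct X) : Prop :=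
  ∃ B : Set (Set (X × X)), B.Countable ∧ C.IsBase B

/-- Ordinal: the coarse structure has a base linearly ordered by inclusion. -/
def Ordinal (C : CoarseStruct X) : Prop :=
  ∃ B : Set (Set (X × X)), C.IsBase B ∧ IsChain (· ⊆ ·) B

def MacroUniform (C : CoarseStruct X) (f : X → ℝ) : Prop :=
  ∀ E ∈ C.sets, ∃ r : ℝ, 0 < r ∧
    ∀ x : X, ∀ y ∈ ball E {x}, ∀ z ∈ ball E {x}, |f y - f z| ≤ r

def Submetrizable (C : CoarseStruct X) : Prop :=
  ¬C.IsBounded Set.univ ∧ ∃ C'' : CoarseStruct X,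
    C.sets ⊆ C''.sets ∧ ¬C''.IsBounded Set.univ ∧ C''.Metrizable

def SlowlyOscillating (C : CoarseStruct X) (f : X → ℝ) : Prop :=
  ∀ E ∈ C.sets, ∀ ε : ℝ, 0 < ε → ∃ B : Set X, C.IsBounded B ∧
    ∀ x ∉ B, ∀ y ∈ ball E {x}, ∀ z ∈ ball E {x}, |f y - f z| < ε

/-- The entourage `H_{(E,Φ)}`: `H[x] = {x}` for `x ∈ Φ` and `H[x] = E[x] \ Φ` for `x ∉ Φ`. -/
def EPhiBase (E : Set (X × X)) (Φ : Set X) : Set (X × X) :=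
  {p | (p.1 ∈ Φ ∧ p.1 = p.2) ∨ (p.1 ∉ Φ ∧ p.2 ∉ Φ ∧ (p.1, p.2) ∈ E)}

/-- The family of entourages of the coarse structure `E_φ` with base `{H_{(E,Φ)}}`. -/
def EPhiSets (C : CoarseStruct X) (φ : Filter X) : Set (Set (X × X)) :=
  {E' | Set.diagonal X ⊆ E' ∧ ∃ E ∈ C.sets, ∃ Φ ∈ φ, E' ⊆ EPhiBase E Φ}

/-- The set `B♯` of ultrafilters containing the complement of every bounded set. -/
def Bsharp (C : CoarseStruct X) : Set (Ultrafilter X) :=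
  {p | ∀ B : Set X, C.IsBounded B → Bᶜ ∈ p}

/-- Parallelity of ultrafilters: `p ∥ q`. -/
def Parallel (C : CoarseStruct X) (p q : Ultrafilter X) : Prop :=
  ∃ E ∈ C.sets, ∀ P ∈ p, ball E P ∈ q

def AsympDisjoint (C : CoarseStruct X) (A B : Set X) : Prop :=
  ∀ E ∈ C.sets, C.IsBounded (ball E A ∩ ball E B)

def AsympNbhd (C : CoarseStruct X) (A U : Set X) : Prop :=
  ∀ E ∈ C.sets, C.IsBounded (ball E A \ U)

def Normal (C : CoarseStruct X) : Prop :=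
  ∀ A B : Set X, C.AsympDisjoint A B →
    ∃ U V : Set X, C.AsympNbhd A U ∧ C.AsympNbhd B V ∧ Disjoint U V

end CoarseStruct

/-- λ-equivalent coarse structures have the same bounded sets. -/
theorem lambdaEquiv_bounded_eq {X : Type*} (C C' : CoarseStruct X)
    (h : CoarseStruct.LambdaEquiv C C') :
    ∀ B : Set X, C.IsBounded B ↔ C'.IsBounded B := by
  intro B
  rcases isEmpty_or_nonempty X with hX | ⟨⟨x⟩⟩
  · constructor <;> rintro ⟨E, hE, x, _⟩ <;> exact hX.elim x
  · have key : ∀ D : CoarseStruct X, D.IsBounded ∅ := fun D =>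
      ⟨_, D.diagonal_mem, x, by simp [CoarseStruct.ball]⟩
    have key2 : ∀ D : CoarseStruct X, ∀ B : Set X,
        (D.IsBounded B ↔ D.Linked B ∅) := by
      intro D B
      constructor
      · intro hB; exact Or.inl ⟨hB, key D⟩
      · rintro (⟨hB, _⟩ | ⟨A', B', _, hB'sub, _, hB'u, _⟩)
        · exact hB
        · rw [Set.subset_empty_iff] at hB'sub
          exact absurd (hB'sub ▸ key D) hB'u
    rw [key2 C B, key2 C' B, h]
end

section
/- A coarse space (X, E) is discrete if and only if for all subsets Y, Z ⊆ X with Y δ Z, both Y \ Z and Z \ Y are bounded. -/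
open Set

namespace CoarseStruct

variable {X : Type*}

lemma isBounded_mono (C : CoarseStruct X) {A B : Set X} (h : C.IsBounded B) (hs : A ⊆ B) :
    C.IsBounded A := by
  obtain ⟨E, hE, x, hx⟩ := h; exact ⟨E, hE, x, hs.trans hx⟩

lemma isBounded_ball (C : CoarseStruct X) {E : Set (X × X)} (hE : E ∈ C.sets) {B : Set X}
    (h : C.IsBounded B) : C.IsBounded (ball E B) := by
  obtain ⟨E₀, hE₀, x, hx⟩ := h
  refine ⟨_, C.comp_mem E₀ hE₀ E hE, x, ?_⟩
  rintro y ⟨b, hb, hby⟩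
  obtain ⟨x', hx', hxb⟩ := hx hb
  exact ⟨x, rfl, b, by simpa [show x' = x from hx'] using hxb, hby⟩

/-- symmetric closure -/
lemma symmClosure_mem (C : CoarseStruct X) {E : Set (X × X)} (hE : E ∈ C.sets) :
    (E ∪ {p : X × X | (p.2, p.1) ∈ E}) ∈ C.sets := by
  apply C.subset_mem _ (C.comp_mem E hE _ (C.inv_mem E hE))
  · rintro ⟨a, b⟩ h
    have hab : a = b := h
    subst hab
    exact Or.inl (C.diagonal_subset E hE rfl)
  · rintro ⟨a, b⟩ (h | h)
    · exact ⟨b, h, C.diagonal_subset E hE rfl⟩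
    · exact ⟨a, C.diagonal_subset E hE rfl, h⟩

end CoarseStruct

/-- `(X, E)` is discrete iff for all `Y δ Z`, both `Y \ Z` and `Z \ Y` are bounded. -/
theorem discrete_iff_close_diff_bounded {X : Type*} (C : CoarseStruct X) :
    C.Discrete ↔
      ∀ Y Z : Set X, C.Close Y Z → C.IsBounded (Y \ Z) ∧ C.IsBounded (Z \ Y) := by
  constructor
  · intro hd Y Z ⟨E, hE, hYZ, hZY⟩
    obtain ⟨B, hB, hball⟩ := hd E hE
    have key : ∀ A B' : Set X, A ⊆ CoarseStruct.ball E B' →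
        A \ B' ⊆ CoarseStruct.ball E B := by
      intro A B' hsub y hy
      obtain ⟨z, hz, hzy⟩ := hsub hy.1
      have hzB : z ∈ B := by
        by_contra hzB
        have := hball z hzB
        have hyz : y ∈ CoarseStruct.ball E {z} := ⟨z, rfl, hzy⟩
        rw [this] at hyz
        exact hy.2 (hyz ▸ hz)
      exact ⟨z, hzB, hzy⟩
    exact ⟨C.isBounded_mono (C.isBounded_ball hE hB) (key Y Z hYZ),
      C.isBounded_mono (C.isBounded_ball hE hB) (key Z Y hZY)⟩
  · intro h E hE
    set F : Set (X × X) := E ∪ {p : X × X | (p.2, p.1) ∈ E} with hFdef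
    have hF : F ∈ C.sets := C.symmClosure_mem hE
    have hFsymm : ∀ a b : X, (a, b) ∈ F → (b, a) ∈ F := by
      rintro a b (h1 | h1)
      · exact Or.inr h1
      · exact Or.inl h1
    have hFdiag : ∀ a : X, (a, a) ∈ F :=
      fun a => Or.inl (C.diagonal_subset E hE rfl)
    -- D : set of points with nontrivial F-ball
    set D : Set X := {x | ∃ y, y ≠ x ∧ (x, y) ∈ F} with hDdef
    -- Zorn: maximal subset of D with pairwise disjoint F-balls
    set S : Set (Set X) :=
      {Y | Y ⊆ D ∧ ∀ y ∈ Y, ∀ y' ∈ Y, y ≠ y' →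
        ∀ w : X, (y, w) ∈ F → (y', w) ∈ F → False} with hSdef
    obtain ⟨Y, hYmax⟩ := zorn_subset S (by
      intro c hc hchain
      refine ⟨⋃₀ c, ⟨?_, ?_⟩, fun s hs => Set.subset_sUnion_of_mem hs⟩
      · exact Set.sUnion_subset fun s hs => (hc hs).1
      · rintro y ⟨s, hs, hy⟩ y' ⟨s', hs', hy'⟩ hne w hw hw'
        rcases hchain.total hs hs' with hss | hss
        · exact (hc hs').2 y (hss hy) y' hy' hne w hw hw'
        · exact (hc hs).2 y hy y' (hss hy') hne w hw hw')
    obtain ⟨⟨hYD, hYdisj⟩, hmax⟩ := hYmax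
    -- choose partners
    have hpart : ∀ y ∈ Y, ∃ z, z ≠ y ∧ (y, z) ∈ F := fun y hy => hYD hy
    classical
    choose! f hf1 hf2 using hpart
    set Z : Set X := f '' Y with hZdef
    have hYZdisj : ∀ y ∈ Y, y ∉ Z := by
      rintro y hy ⟨y', hy', hfy⟩
      by_cases hne : y' = y
      · subst hne
        exact hf1 y' hy' hfy
      · exact hYdisj y' hy' y hy hne y (hfy ▸ hf2 y' hy') (hFdiag y)
    have hclose : C.Close Y Z := by
      refine ⟨F, hF, ?_, ?_⟩
      · intro y hy
        exact ⟨f y, ⟨y, hy, rfl⟩, hFsymm _ _ (hf2 y hy)⟩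
      · rintro z ⟨y, hy, rfl⟩
        exact ⟨y, hy, hf2 y hy⟩
    have hYbdd : C.IsBounded Y := by
      have := (h Y Z hclose).1
      have heq : Y \ Z = Y := Set.Subset.antisymm Set.diff_subset
        (fun x hx => ⟨hx, hYZdisj x hx⟩)
      rwa [heq] at this
    -- D ⊆ ball (F ∘ F) Y
    have hDsub : D ⊆ CoarseStruct.ball
        {p : X × X | ∃ z, (p.1, z) ∈ F ∧ (z, p.2) ∈ F} Y := by
      intro x hx
      by_cases hxY : x ∈ Y
      · exact ⟨x, hxY, x, hFdiag x, hFdiag x⟩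
      · have : ¬ (insert x Y ∈ S) := by
          intro hmem
          exact hxY (hmax hmem (Set.subset_insert x Y) (Set.mem_insert x Y))
        have hins : insert x Y ⊆ D := Set.insert_subset hx hYD
        simp only [hSdef, Set.mem_setOf_eq, not_and] at this
        have := this hins
        push_neg at this
        obtain ⟨y, hy, y', hy', hne, w, hw, hw', -⟩ := this
        rcases Set.mem_insert_iff.mp hy with rfl | hyY
        · rcases Set.mem_insert_iff.mp hy' with rfl | hy'Y
          · exact absurd rfl hne
          · exact ⟨y', hy'Y, w, hw', hFsymm _ _ hw⟩
        · rcases Set.mem_insert_iff.mp hy' with rfl | hy'Y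
          · exact ⟨y, hyY, w, hw, hFsymm _ _ hw'⟩
          · exact absurd (hYdisj y hyY y' hy'Y hne w hw hw') not_false
    have hDbdd : C.IsBounded D :=
      C.isBounded_mono (C.isBounded_ball (C.comp_mem F hF F hF) hYbdd) hDsub
    refine ⟨D, hDbdd, fun x hx => ?_⟩
    ext y
    constructor
    · rintro ⟨a, ha, hay⟩
      have hax : a = x := ha
      subst hax
      simp only [Set.mem_singleton_iff]
      by_contra hne
      exact hx ⟨y, hne, Or.inl hay⟩
    · rintro rfl
      exact ⟨y, rfl, C.diagonal_subset E hE rfl⟩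
end

section
/- Every discrete coarse space (X, E) is λ-rigid: if E' is any coarse structure on X with the same linkness relation as E, then E' = E. -/
open Set

namespace CoarseStruct

variable {X : Type*}

lemma aux_ext_sets {C C' : CoarseStruct X} (h : C.sets = C'.sets) : C = C' := by
  cases C; cases C'; simp only at h; subst h; rfl

lemma aux_ball_mono {E : Set (X × X)} {A B : Set X} (h : A ⊆ B) : ball E A ⊆ ball E B :=
  fun _ ⟨a, ha, hae⟩ => ⟨a, h ha, hae⟩

lemma aux_bounded_subset (C : CoarseStruct X) {A B : Set X} (hB : C.IsBounded B)
    (h : A ⊆ B) : C.IsBounded A := by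
  obtain ⟨E, hE, x, hx⟩ := hB
  exact ⟨E, hE, x, h.trans hx⟩

lemma aux_bounded_singleton (C : CoarseStruct X) (x : X) : C.IsBounded {x} :=
  ⟨Set.diagonal X, C.diagonal_mem, x, fun y hy => ⟨x, rfl, by simp [hy.symm, Set.mem_diagonal_iff]⟩⟩

lemma aux_bounded_ball (C : CoarseStruct X) {B : Set X} (hB : C.IsBounded B)
    {F : Set (X × X)} (hF : F ∈ C.sets) : C.IsBounded (ball F B) := by
  obtain ⟨E, hE, x, hx⟩ := hB
  refine ⟨_, C.comp_mem E hE F hF, x, ?_⟩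
  rintro y ⟨b, hb, hby⟩
  obtain ⟨w, rfl, hxb⟩ := hx hb
  exact ⟨w, rfl, ⟨b, hxb, hby⟩⟩

lemma aux_union_mem (C : CoarseStruct X) {E F : Set (X × X)} (hE : E ∈ C.sets)
    (hF : F ∈ C.sets) : E ∪ F ∈ C.sets := by
  refine C.subset_mem _ (C.comp_mem E hE F hF) (E ∪ F)
    (fun p hp => Or.inl (C.diagonal_subset E hE hp)) ?_
  rintro ⟨a, b⟩ (hab | hab)
  · exact ⟨b, hab, C.diagonal_subset F hF rfl⟩
  · exact ⟨a, C.diagonal_subset E hE rfl, hab⟩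

lemma aux_bounded_union (C : CoarseStruct X) {A B : Set X} (hA : C.IsBounded A)
    (hB : C.IsBounded B) : C.IsBounded (A ∪ B) := by
  obtain ⟨E, hE, x, hx⟩ := hA
  obtain ⟨F, hF, y, hy⟩ := hB
  obtain ⟨G, hG, hxy⟩ := C.cover (x, y)
  refine ⟨_, aux_union_mem C hE (C.comp_mem G hG F hF), x, ?_⟩
  rintro z (hz | hz)
  · obtain ⟨w, rfl, hxz⟩ := hx hz
    exact ⟨w, rfl, Or.inl hxz⟩
  · obtain ⟨w, rfl, hyz⟩ := hy hz
    exact ⟨x, rfl, Or.inr ⟨w, hxy, hyz⟩⟩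

lemma aux_square_mem (C : CoarseStruct X) {B : Set X} (hB : C.IsBounded B) :
    Set.diagonal X ∪ B ×ˢ B ∈ C.sets := by
  obtain ⟨E, hE, x, hx⟩ := hB
  refine C.subset_mem _ (C.comp_mem _ (C.inv_mem E hE) E hE) _ (fun p hp => Or.inl hp) ?_
  rintro ⟨a, b⟩ (hab | ⟨ha, hb⟩)
  · refine ⟨a, ?_, ?_⟩
    · exact C.diagonal_subset E hE rfl
    · simp only [Set.mem_diagonal_iff] at hab; exact hab ▸ C.diagonal_subset E hE rfl
  · obtain ⟨w, rfl, hxa⟩ := hx ha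
    obtain ⟨w', hw', hxb⟩ := hx hb
    rw [Set.mem_singleton_iff] at hw'
    exact ⟨w, hxa, hw' ▸ hxb⟩

/-- In a discrete space, every entourage sits inside the diagonal plus a bounded square. -/
lemma aux_discrete_char (C : CoarseStruct X) (hd : C.Discrete) {E : Set (X × X)}
    (hE : E ∈ C.sets) : ∃ B : Set X, C.IsBounded B ∧ E ⊆ Set.diagonal X ∪ B ×ˢ B := by
  obtain ⟨B₁, hB₁b, hB₁⟩ := hd E hE
  obtain ⟨B₂, hB₂b, hB₂⟩ := hd _ (C.inv_mem E hE)
  refine ⟨B₁ ∪ B₂, aux_bounded_union C hB₁b hB₂b, ?_⟩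
  rintro ⟨a, b⟩ hab
  by_cases hne : a = b
  · exact Or.inl hne
  · refine Or.inr ⟨Or.inl ?_, Or.inr ?_⟩
    · by_contra ha
      have : b ∈ ball E {a} := ⟨a, rfl, hab⟩
      rw [hB₁ a ha] at this
      exact hne this.symm
    · by_contra hb
      have : a ∈ ball {p : X × X | (p.2, p.1) ∈ E} {b} := ⟨b, rfl, hab⟩
      rw [hB₂ b hb] at this
      exact hne this

/-- In a discrete space, close sets differ by bounded sets. -/
lemma aux_close_diff_bounded (C : CoarseStruct X) (hd : C.Discrete) {A B : Set X}
    (h : C.Close A B) : C.IsBounded (A \ B) := by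
  obtain ⟨E, hE, hAB, _⟩ := h
  obtain ⟨B₀, hB₀b, hB₀⟩ := hd E hE
  refine aux_bounded_subset C (aux_bounded_ball C
    (aux_bounded_subset C hB₀b (Set.inter_subset_right (s := B))) hE) ?_
  rintro a ⟨haA, haB⟩
  obtain ⟨b, hb, hba⟩ := hAB haA
  by_cases hbB₀ : b ∈ B₀
  · exact ⟨b, ⟨hb, hbB₀⟩, hba⟩
  · have : a ∈ ball E {b} := ⟨b, rfl, hba⟩
    rw [hB₀ b hbB₀] at this
    exact absurd (this ▸ hb) haB

lemma aux_linked_singleton_iff (C : CoarseStruct X) (A : Set X) (x : X) :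
    C.Linked A {x} ↔ C.IsBounded A := by
  constructor
  · rintro (⟨hA, _⟩ | ⟨A', B', _, hB'x, _, hB'unb, _⟩)
    · exact hA
    · exact absurd (aux_bounded_subset C (aux_bounded_singleton C x) hB'x) hB'unb
  · exact fun hA => Or.inl ⟨hA, aux_bounded_singleton C x⟩

end CoarseStruct

open CoarseStruct in
/-- Every discrete coarse space is λ-rigid. -/
theorem discrete_lambdaRigid {X : Type*} (C : CoarseStruct X)
    (h : C.Discrete) : C.LambdaRigid := by
  intro C' hEq
  rcases isEmpty_or_nonempty X with hX | hne
  · refine aux_ext_sets ?_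
    have key : ∀ E : Set (X × X), E = Set.diagonal X := fun E => by
      ext p; exact (hX.false p.1).elim
    ext E
    constructor
    · intro _; rw [key E]; exact C.diagonal_mem
    · intro _; rw [key E]; exact C'.diagonal_mem
  · -- the two structures have the same bounded sets
    obtain ⟨x₀⟩ := hne
    have hbd : ∀ A : Set X, C'.IsBounded A ↔ C.IsBounded A := fun A => by
      rw [← aux_linked_singleton_iff C' A x₀, ← aux_linked_singleton_iff C A x₀, hEq]
    refine aux_ext_sets ?_
    ext E'
    constructor
    · -- hard direction: E' ∈ C'.sets → E' ∈ C.sets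
      intro hE'
      set F : Set (X × X) := E' ∪ {p : X × X | (p.2, p.1) ∈ E'} with hFdef
      have hFmem : F ∈ C'.sets := aux_union_mem C' hE' (C'.inv_mem E' hE')
      have hFsymm : ∀ {x y : X}, (x, y) ∈ F → (y, x) ∈ F := by
        rintro x y (hxy | hxy)
        · exact Or.inr hxy
        · exact Or.inl hxy
      set T : Set X := {x : X | ∃ y, y ≠ x ∧ (x, y) ∈ F} with hTdef
      have hE'T : E' ⊆ Set.diagonal X ∪ T ×ˢ T := by
        rintro ⟨x, y⟩ hxy
        by_cases hne : x = y
        · exact Or.inl hne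
        · refine Or.inr ⟨⟨y, fun hh => hne hh.symm, Or.inl hxy⟩,
            ⟨x, hne, hFsymm (Or.inl hxy)⟩⟩
      have hT : C.IsBounded T := by
        by_contra hTunb
        have hg : ∀ x ∈ T, ∃ y, y ≠ x ∧ (x, y) ∈ F := fun x hx => hx
        choose! gg hgne hgF using hg
        -- Zorn: maximal independent subset of T
        obtain ⟨M, hMmem, hMmax⟩ :=
          zorn_subset {A : Set X | A ⊆ T ∧ ∀ a ∈ A, gg a ∉ A} (by
            intro c hc hchain
            refine ⟨⋃₀ c, ⟨?_, ?_⟩, fun s hs => Set.subset_sUnion_of_mem hs⟩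
            · rintro x ⟨s, hs, hxs⟩
              exact (hc hs).1 hxs
            · rintro a ⟨s, hs, has⟩ ⟨s', hs', hgas'⟩
              rcases hchain.total hs hs' with hss | hss
              · exact (hc hs').2 a (hss has) hgas'
              · exact (hc hs).2 a has (hss hgas'))
        obtain ⟨hMT, hMind⟩ := hMmem
        -- every point of T is in M or in ball F M
        have hTsub : T ⊆ M ∪ ball F M := by
          intro x hxT
          by_contra hx
          rw [Set.mem_union] at hx
          push_neg at hx
          obtain ⟨hxM, hxball⟩ := hx
          have hMx : M ∪ {x} ∈ {A : Set X | A ⊆ T ∧ ∀ a ∈ A, gg a ∉ A} := by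
            constructor
            · rintro y (hy | hy)
              · exact hMT hy
              · exact hy ▸ hxT
            · rintro a (ha | ha) (hga | hga)
              · exact hMind a ha hga
              · exact hxball (hga ▸ ⟨a, ha, hgF a (hMT ha)⟩)
              · rw [Set.mem_singleton_iff] at ha
                subst ha
                exact hxball ⟨gg a, hga, hFsymm (hgF a hxT)⟩
              · rw [Set.mem_singleton_iff] at ha hga
                subst ha
                exact hgne a hxT hga
          have := hMmax hMx Set.subset_union_left (Or.inr rfl)
          exact hxM this
        -- M is unbounded
        have hMunb : ¬ C'.IsBounded M := by
          intro hMb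
          exact hTunb ((hbd T).mp (aux_bounded_subset C'
            (aux_bounded_union C' hMb (aux_bounded_ball C' hMb hFmem)) hTsub))
        have hAball : M ⊆ CoarseStruct.ball F (gg '' M) := fun a ha =>
          ⟨gg a, ⟨a, ha, rfl⟩, hFsymm (hgF a (hMT ha))⟩
        have hBball : gg '' M ⊆ CoarseStruct.ball F M := by
          rintro _ ⟨a, ha, rfl⟩
          exact ⟨a, ha, hgF a (hMT ha)⟩
        have hBunb : ¬ C'.IsBounded (gg '' M) := fun hb =>
          hMunb (aux_bounded_subset C' (aux_bounded_ball C' hb hFmem) hAball)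
        have hlink' : C'.Linked M (gg '' M) :=
          Or.inr ⟨M, gg '' M, subset_rfl, subset_rfl, hMunb, hBunb, F, hFmem, hAball, hBball⟩
        have hlink : C.Linked M (gg '' M) := (hEq M (gg '' M)).mpr hlink'
        rcases hlink with ⟨hMb, _⟩ | ⟨A', B', hA'M, hB'B, hA'unb, _, hclose⟩
        · exact hMunb ((hbd M).mpr hMb)
        · have hdiff := aux_close_diff_bounded C h hclose
          refine hA'unb (aux_bounded_subset C hdiff ?_)
          intro a ha
          refine ⟨ha, fun haB' => ?_⟩
          obtain ⟨b, hb, hba⟩ := hB'B haB'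
          exact hMind b hb (hba ▸ hA'M ha)
      exact C.subset_mem _ (aux_square_mem C hT) E' (C'.diagonal_subset E' hE') hE'T
    · -- easy direction: E' ∈ C.sets → E' ∈ C'.sets
      intro hE
      obtain ⟨B, hBb, hEsub⟩ := aux_discrete_char C h hE
      exact C'.subset_mem _ (aux_square_mem C' ((hbd B).mpr hBb)) E'
        (C.diagonal_subset _ hE) hEsub
end

section
/- Let (X, E) be an unbounded coarse space and φ a filter on X containing the complement of every bounded set. Define E_φ to be the coarse structure on X with base {H_{(E₀,Φ)} : E₀ ∈ E, Φ ∈ φ}, where H_{(E₀,Φ)}[x] = {x} if x ∈ Φ and H_{(E₀,Φ)}[x] = E₀[x] \ Φ if x ∉ Φ. Then E_φ ⊆ E and the bounded sets of (X, E_φ) coincide with the bounded sets of (X, E). -/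
open Set

/-- For an unbounded coarse space and a filter `φ` containing complements of
bounded sets, `E_φ ⊆ E` and the bounded sets of `E_φ` coincide with those of `E`. -/
theorem ephi_subset_and_bounded_eq {X : Type*} (C : CoarseStruct X) (φ : Filter X)
    (hX : ¬C.IsBounded Set.univ)
    (hφ : ∀ B : Set X, C.IsBounded B → Bᶜ ∈ φ)
    (D : CoarseStruct X) (hD : D.sets = CoarseStruct.EPhiSets C φ) :
    D.sets ⊆ C.sets ∧ ∀ B : Set X, D.IsBounded B ↔ C.IsBounded B := by
  have hsub : D.sets ⊆ C.sets := by
    intro E' hE'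
    rw [hD] at hE'
    obtain ⟨hdiag, E, hE, Φ, hΦ, hsubE⟩ := hE'
    refine C.subset_mem E hE E' hdiag ?_
    intro p hp
    rcases hsubE hp with ⟨_, heq⟩ | ⟨_, _, hpE⟩
    · exact C.diagonal_subset E hE (Set.mem_diagonal_iff.mpr heq)
    · exact hpE
  refine ⟨hsub, fun B => ⟨?_, ?_⟩⟩
  · rintro ⟨E, hE, x, hB⟩
    exact ⟨E, hsub hE, x, hB⟩
  · rintro ⟨E, hE, x, hB⟩
    rcases Set.eq_empty_or_nonempty B with rfl | ⟨x₀, hx₀⟩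
    · refine ⟨Set.diagonal X, ?_, x, by simp⟩
      rw [hD]
      refine ⟨subset_rfl, E, hE, Set.univ, Filter.univ_mem, ?_⟩
      rintro ⟨a, b⟩ hab
      exact Or.inl ⟨trivial, hab⟩
    · have hEinv_mem := C.inv_mem E hE
      set E2 := {p : X × X | ∃ z, (p.1, z) ∈ {p : X × X | (p.2, p.1) ∈ E} ∧ (z, p.2) ∈ E}
        with hE2def
      have hE2_mem : E2 ∈ C.sets := C.comp_mem _ hEinv_mem _ hE
      have hBE2 : ∀ b ∈ B, (x₀, b) ∈ E2 := by
        intro b hb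
        obtain ⟨a, rfl, hax⟩ := hB hx₀
        obtain ⟨a', rfl, hab⟩ := hB hb
        exact ⟨_, hax, hab⟩
      have hΦ : Bᶜ ∈ φ := hφ B ⟨E, hE, x, hB⟩
      refine ⟨CoarseStruct.EPhiBase E2 Bᶜ, ?_, x₀, ?_⟩
      · rw [hD]
        refine ⟨?_, E2, hE2_mem, Bᶜ, hΦ, subset_rfl⟩
        rintro ⟨a, b⟩ hab
        have hab' : a = b := hab
        by_cases ha : a ∈ B
        · refine Or.inr ⟨by simpa using ha, by simpa [← hab'] using ha, ?_⟩
          have : (a, b) ∈ Set.diagonal X := hab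
          exact C.diagonal_subset E2 hE2_mem this
        · exact Or.inl ⟨ha, hab'⟩
      · intro b hb
        refine ⟨x₀, rfl, Or.inr ⟨by simpa using hx₀, by simpa using hb, hBE2 b hb⟩⟩
end

section
/- Let E be the coarse structure on ℕ with base {(F × F) ∪ A : F a finite subset of ℕ}, where A = {(2n+1, 2n+2), (2n+2, 2n+1) : n ∈ ω} (together with the diagonal). Then the set of even numbers 2ℕ is large and discrete in (ℕ, E), so (ℕ, E) is coarsely discrete; moreover, (ℕ, E) is not λ-rigid. -/
open Set

/-- The relation `A = {(2n+1, 2n+2), (2n+2, 2n+1) : n ∈ ω}`. -/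
def pairRel : Set (ℕ × ℕ) :=
  {p | ∃ n : ℕ, p = (2 * n + 1, 2 * n + 2) ∨ p = (2 * n + 2, 2 * n + 1)}

/-- The coarse structure on ℕ with base `{(F × F) ∪ A : F finite}` (plus the diagonal). -/
def exampleSets : Set (Set (ℕ × ℕ)) :=
  {E' | Set.diagonal ℕ ⊆ E' ∧
    ∃ F : Finset ℕ, E' ⊆ ((F : Set ℕ) ×ˢ (F : Set ℕ)) ∪ pairRel ∪ Set.diagonal ℕ}

/-!
Outside a finite square, entourages of `(ℕ, E)` only join the two points of a block
`{2n+1, 2n+2}`; hence bounded means finite, and the even numbers, one per block, are large and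
discrete. For a filter `f`, let `E_f` keep only the pairs of the blocks indexed by sets whose
complement lies in `f`, so that `E_⊥ = E`. When `f` is a free ultrafilter, an infinite set of
blocks splits into two infinite halves, one of which has its complement in `f`; so two infinite
`E`-close sets have infinite `E_f`-close subsets, and `E_f` has the same linkness as `E`. Yet
`E_f` does not contain all pairs at once, as a cofinite set of blocks cannot have its complement
in `f`.
-/

namespace CoarseStruct

variable {X : Type*}

theorem ext {C D : CoarseStruct X} (h : C.sets = D.sets) : C = D := by
  cases C; cases D; subst h; rfl

theorem Close.mono {C D : CoarseStruct X} (h : C.sets ⊆ D.sets) {A B : Set X}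
    (hAB : C.Close A B) : D.Close A B :=
  let ⟨E, hE, hA, hB⟩ := hAB
  ⟨E, h hE, hA, hB⟩

theorem ball_mono {E E' : Set (X × X)} (h : E ⊆ E') (A : Set X) : ball E A ⊆ ball E' A :=
  fun _ ⟨a, ha, hE⟩ => ⟨a, ha, h hE⟩

@[simp]
theorem mem_ball_singleton {E : Set (X × X)} {x y : X} : y ∈ ball E {x} ↔ (x, y) ∈ E := by
  simp [ball]

end CoarseStruct

theorem Ultrafilter.exists_infinite_subset_compl_mem {α : Type*} (U : Ultrafilter α)
    {s : Set α} (hs : s.Infinite) : ∃ t ⊆ s, t.Infinite ∧ tᶜ ∈ U := by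
  obtain ⟨t, u, rfl, htu, hcard⟩ := hs.exists_union_disjoint_cardinal_eq_of_infinite
  have hfin : t.Finite ↔ u.Finite := by
    rw [← Cardinal.lt_aleph0_iff_set_finite, ← Cardinal.lt_aleph0_iff_set_finite, hcard]
  have ht : t.Infinite := fun ht => hs (ht.union (hfin.1 ht))
  by_cases htU : t ∈ U
  · refine ⟨u, subset_union_right, fun hu => ht (hfin.2 hu), ?_⟩
    exact U.compl_mem_iff_notMem.2 fun huU => U.neBot.not_disjoint htU huU htu
  · exact ⟨t, subset_union_left, ht, U.compl_mem_iff_notMem.2 htU⟩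

open CoarseStruct

/-- `(a + 1) / 2` is the index of the block of `a` among `{0}, {1, 2}, {3, 4}, …`. -/
def pairEntourage (N : ℕ) (T : Set ℕ) : Set (ℕ × ℕ) :=
  {p | (p.1 < N ∧ p.2 < N) ∨ p.1 = p.2 ∨
    ((p.1 + 1) / 2 = (p.2 + 1) / 2 ∧ (p.1 + 1) / 2 ∈ T)}

section pairEntourage

variable {N N' : ℕ} {T T' : Set ℕ} {x y z : ℕ}

theorem mem_pairEntourage : (x, y) ∈ pairEntourage N T ↔
    (x < N ∧ y < N) ∨ x = y ∨ ((x + 1) / 2 = (y + 1) / 2 ∧ (x + 1) / 2 ∈ T) :=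
  Iff.rfl

theorem pairEntourage_mono (hN : N ≤ N') (hT : T ⊆ T') :
    pairEntourage N T ⊆ pairEntourage N' T' := by
  rintro ⟨x, y⟩ h
  rcases mem_pairEntourage.1 h with ⟨hx, hy⟩ | rfl | ⟨hxy, hxT⟩
  exacts [Or.inl ⟨by omega, by omega⟩, Or.inr (Or.inl rfl), Or.inr (Or.inr ⟨hxy, hT hxT⟩)]

theorem diagonal_subset_pairEntourage : diagonal ℕ ⊆ pairEntourage N T :=
  fun _ h => Or.inr (Or.inl h)

theorem swap_mem_pairEntourage (h : (x, y) ∈ pairEntourage N T) :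
    (y, x) ∈ pairEntourage N T := by
  rcases mem_pairEntourage.1 h with ⟨hx, hy⟩ | rfl | ⟨hxy, hxT⟩
  exacts [Or.inl ⟨hy, hx⟩, Or.inr (Or.inl rfl), Or.inr (Or.inr ⟨hxy.symm, hxy ▸ hxT⟩)]

theorem mem_pairEntourage_of_comp (hxz : (x, z) ∈ pairEntourage N T)
    (hzy : (z, y) ∈ pairEntourage N' T') : (x, y) ∈ pairEntourage (N + N' + 1) (T ∪ T') := by
  rcases mem_pairEntourage.1 hxz with ⟨hx, hz⟩ | rfl | ⟨hxz, hxT⟩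
  · rcases mem_pairEntourage.1 hzy with ⟨-, hy⟩ | rfl | ⟨hzy, -⟩
    all_goals exact Or.inl ⟨by omega, by omega⟩
  · exact pairEntourage_mono (N := N') (by omega) subset_union_right hzy
  · rcases mem_pairEntourage.1 hzy with ⟨hz, hy⟩ | rfl | ⟨hzy, -⟩
    · exact Or.inl ⟨by omega, by omega⟩
    · exact pairEntourage_mono (N := N) (by omega) subset_union_left
        (Or.inr (Or.inr ⟨hxz, hxT⟩))
    · exact Or.inr (Or.inr ⟨hxz.trans hzy, Or.inl hxT⟩)

theorem ball_pairEntourage_subset : ball (pairEntourage N T) {x} ⊆ Iio (N + x + 2) := by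
  intro y hy
  rcases mem_pairEntourage.1 (mem_ball_singleton.1 hy) with ⟨-, hy⟩ | rfl | ⟨hxy, -⟩
  all_goals simp only [mem_Iio]; omega

end pairEntourage

def pairCoarse (f : Filter ℕ) : CoarseStruct ℕ where
  sets := {E | diagonal ℕ ⊆ E ∧ ∃ N T, Tᶜ ∈ f ∧ E ⊆ pairEntourage N T}
  diagonal_mem := ⟨subset_rfl, 0, ∅, by simp, diagonal_subset_pairEntourage⟩
  diagonal_subset _ hE := hE.1
  comp_mem := by
    rintro E ⟨hEd, N, T, hT, hE⟩ E' ⟨hE'd, N', T', hT', hE'⟩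
    refine ⟨fun p hp => ⟨p.1, hEd rfl, hp ▸ hE'd rfl⟩, N + N' + 1, T ∪ T', ?_, ?_⟩
    · rw [compl_union]; exact Filter.inter_mem hT hT'
    · rintro ⟨x, y⟩ ⟨z, hxz, hzy⟩
      exact mem_pairEntourage_of_comp (hE hxz) (hE' hzy)
  inv_mem := by
    rintro E ⟨hEd, N, T, hT, hE⟩
    exact ⟨fun p hp => hEd hp.symm, N, T, hT, fun p hp => swap_mem_pairEntourage (hE hp)⟩
  subset_mem := by
    rintro E ⟨-, N, T, hT, hE⟩ E' hd hsub
    exact ⟨hd, N, T, hT, hsub.trans hE⟩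
  cover := by
    rintro ⟨x, y⟩
    exact ⟨pairEntourage (x + y + 1) ∅,
      ⟨diagonal_subset_pairEntourage, _, ∅, by simp, subset_rfl⟩,
      Or.inl ⟨by omega, by omega⟩⟩

section pairCoarse

variable {f g : Filter ℕ}

theorem pairEntourage_mem_pairCoarse {N : ℕ} {T : Set ℕ} (hT : Tᶜ ∈ f) :
    pairEntourage N T ∈ (pairCoarse f).sets :=
  ⟨diagonal_subset_pairEntourage, N, T, hT, subset_rfl⟩

theorem pairCoarse_sets_anti (h : f ≤ g) : (pairCoarse g).sets ⊆ (pairCoarse f).sets :=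
  fun _ ⟨hd, N, T, hT, hE⟩ => ⟨hd, N, T, h hT, hE⟩

theorem isBounded_pairCoarse_iff {B : Set ℕ} : (pairCoarse f).IsBounded B ↔ B.Finite := by
  constructor
  · rintro ⟨E, ⟨-, N, T, -, hE⟩, x, hB⟩
    exact (finite_Iio _).subset (hB.trans ((ball_mono hE _).trans ball_pairEntourage_subset))
  · intro hB
    obtain ⟨N, hN⟩ := hB.bddAbove
    refine ⟨pairEntourage (N + 1) ∅, pairEntourage_mem_pairCoarse (by simp), 0,
      fun b hb => ?_⟩
    have := hN hb
    exact mem_ball_singleton.2 (Or.inl ⟨by omega, by omega⟩)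

theorem pairCoarse_bot_sets : (pairCoarse ⊥).sets = exampleSets := by
  ext E
  refine and_congr_right fun _ => ⟨?_, ?_⟩
  · rintro ⟨N, T, -, hE⟩
    refine ⟨Finset.range N, hE.trans ?_⟩
    rintro ⟨x, y⟩ h
    rcases mem_pairEntourage.1 h with ⟨hx, hy⟩ | rfl | ⟨hxy, -⟩
    · exact Or.inl (Or.inl ⟨by simpa using hx, by simpa using hy⟩)
    · exact Or.inr rfl
    · by_cases hxy' : x = y
      · exact Or.inr hxy'
      · refine Or.inl (Or.inr ⟨(x + 1) / 2 - 1, ?_⟩)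
        simp only [Prod.ext_iff]
        omega
  · rintro ⟨F, hE⟩
    obtain ⟨N, hN⟩ := F.exists_nat_subset_range
    refine ⟨N, univ, by simp, hE.trans ?_⟩
    rintro ⟨x, y⟩ ((⟨hx, hy⟩ | ⟨n, hn⟩) | h)
    · exact Or.inl ⟨by simpa using hN hx, by simpa using hN hy⟩
    · simp only [Prod.ext_iff] at hn
      exact Or.inr (Or.inr ⟨by omega, trivial⟩)
    · exact Or.inr (Or.inl h)

end pairCoarse

theorem large_even_pairCoarse_bot : (pairCoarse ⊥).Large {n | Even n} := by
  refine ⟨pairEntourage 0 univ, pairEntourage_mem_pairCoarse (by simp),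
    eq_univ_of_forall fun y => ?_⟩
  rcases Nat.even_or_odd y with hy | hy
  · exact ⟨y, hy, Or.inr (Or.inl rfl)⟩
  · rw [Nat.odd_iff] at hy
    exact ⟨y + 1, Nat.even_iff.2 (by omega), Or.inr (Or.inr ⟨by omega, trivial⟩)⟩

theorem discreteOn_even_pairCoarse (f : Filter ℕ) : (pairCoarse f).DiscreteOn {n | Even n} := by
  rintro E ⟨hd, N, T, -, hE⟩
  refine ⟨Iio N, isBounded_pairCoarse_iff.2 (finite_Iio N), fun y ⟨hy, hyN⟩ => ?_⟩
  refine eq_singleton_iff_unique_mem.2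
    ⟨⟨mem_ball_singleton.2 (hd rfl), hy⟩, fun z ⟨hz, hze⟩ => ?_⟩
  simp only [mem_Iio, not_lt, mem_ofPred_eq, Nat.even_iff] at hyN hy hze
  rcases mem_pairEntourage.1 (hE (mem_ball_singleton.1 hz)) with ⟨hy', -⟩ | rfl | ⟨hyz, -⟩
  · omega
  · rfl
  · omega

theorem pairEntourage_univ_notMem_pairCoarse {f : Filter ℕ} [f.NeBot]
    (hf : f ≤ Filter.cofinite) :
    pairEntourage 0 univ ∉ (pairCoarse f).sets := by
  rintro ⟨-, N, T, hT, hE⟩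
  have hTc : Tᶜ ⊆ Iio (N + 1) := by
    intro n hn
    by_contra hnN
    simp only [mem_Iio, not_lt] at hnN
    have hpair : (2 * n - 1, 2 * n) ∈ pairEntourage 0 univ :=
      Or.inr (Or.inr ⟨by omega, trivial⟩)
    rcases mem_pairEntourage.1 (hE hpair) with ⟨h, -⟩ | h | ⟨hblock, hmem⟩
    · omega
    · omega
    · exact hn (by rwa [show (2 * n - 1 + 1) / 2 = n by omega] at hmem)
  exact Filter.compl_notMem (hf (Filter.mem_cofinite.2 ((finite_Iio _).subset hTc))) hT

theorem exists_infinite_close_pairCoarse {f : Filter ℕ}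
    (hf : ∀ I : Set ℕ, I.Infinite → ∃ S ⊆ I, S.Infinite ∧ Sᶜ ∈ f) {A B : Set ℕ}
    (hA : A.Infinite) (hAB : (pairCoarse ⊥).Close A B) :
    ∃ A' ⊆ A, ∃ B' ⊆ B, A'.Infinite ∧ B'.Infinite ∧ (pairCoarse f).Close A' B' := by
  obtain ⟨E, ⟨-, N, T, -, hE⟩, hAB, -⟩ := hAB
  set block : ℕ → ℕ := fun a => (a + 1) / 2
  have hblock : (block '' (A \ Iio N)).Infinite := by
    intro hfin
    obtain ⟨M, hM⟩ := hfin.bddAbove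
    refine (hA.sdiff (finite_Iio N)) ((finite_Iio (2 * M + 1)).subset fun a ha => ?_)
    have := hM (mem_image_of_mem block ha)
    simp only [block, mem_Iio] at this ⊢
    omega
  obtain ⟨S, hSblock, hS, hSf⟩ := hf _ hblock
  set E' := pairEntourage 0 S
  set A' := {a ∈ A \ Iio N | block a ∈ S}
  -- Above `N`, `E` only joins points of the same block, and these blocks lie in `S` for `A'`.
  have hpartner : ∀ a ∈ A', ∃ b ∈ B, (b, a) ∈ E' ∧ (a, b) ∈ E' := by
    rintro a ⟨⟨haA, haN⟩, haS⟩
    obtain ⟨b, hb, hba⟩ := hAB haA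
    simp only [mem_Iio, not_lt] at haN
    rcases mem_pairEntourage.1 (hE hba) with ⟨-, h⟩ | rfl | ⟨hab, -⟩
    · omega
    · exact ⟨b, hb, Or.inr (Or.inl rfl), Or.inr (Or.inl rfl)⟩
    · exact ⟨b, hb, Or.inr (Or.inr ⟨hab, hab ▸ haS⟩),
        Or.inr (Or.inr ⟨hab.symm, haS⟩)⟩
  refine ⟨A', fun a ha => ha.1.1, B ∩ ball E' A', inter_subset_left, ?_, ?_, ?_⟩
  · refine Infinite.of_image block (hS.mono fun s hs => ?_)
    obtain ⟨a, ha, rfl⟩ := hSblock hs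
    exact ⟨a, ⟨ha, hs⟩, rfl⟩
  · refine Infinite.of_image block (hS.mono fun s hs => ?_)
    obtain ⟨a, ha, rfl⟩ := hSblock hs
    obtain ⟨b, hb, hba, hab⟩ := hpartner a ⟨ha, hs⟩
    refine ⟨b, ⟨hb, a, ⟨ha, hs⟩, hab⟩, ?_⟩
    rcases mem_pairEntourage.1 hba with ⟨h, -⟩ | h | ⟨h, -⟩
    exacts [absurd h (Nat.not_lt_zero b), h ▸ rfl, h]
  · refine ⟨E', pairEntourage_mem_pairCoarse hSf, fun a ha => ?_, fun b hb => hb.2⟩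
    obtain ⟨b, hb, hba, hab⟩ := hpartner a ha
    exact ⟨b, ⟨hb, a, ha, hab⟩, hba⟩

theorem linked_pairCoarse_iff {f : Filter ℕ}
    (hf : ∀ I : Set ℕ, I.Infinite → ∃ S ⊆ I, S.Infinite ∧ Sᶜ ∈ f) {A B : Set ℕ} :
    (pairCoarse f).Linked A B ↔ (pairCoarse ⊥).Linked A B := by
  simp only [Linked, isBounded_pairCoarse_iff]
  refine or_congr Iff.rfl ⟨?_, ?_⟩
  · rintro ⟨A', B', hA', hB', hA'i, hB'i, h⟩
    exact ⟨A', B', hA', hB', hA'i, hB'i, h.mono (pairCoarse_sets_anti bot_le)⟩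
  · rintro ⟨A', B', hA', hB', hA'i, -, h⟩
    obtain ⟨A'', hA'', B'', hB'', hA''i, hB''i, h'⟩ :=
      exists_infinite_close_pairCoarse hf hA'i h
    exact ⟨A'', B'', hA''.trans hA', hB''.trans hB', hA''i, hB''i, h'⟩

/-- The even numbers are large and discrete in `(ℕ, E)`, so `(ℕ, E)` is
coarsely discrete; moreover `(ℕ, E)` is not λ-rigid. -/
theorem example_coarselyDiscrete_not_lambdaRigid (C : CoarseStruct ℕ)
    (hC : C.sets = exampleSets) :
    C.Large {n : ℕ | Even n} ∧ C.DiscreteOn {n : ℕ | Even n} ∧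
    C.CoarselyDiscrete ∧ ¬C.LambdaRigid := by
  obtain rfl : C = pairCoarse ⊥ := CoarseStruct.ext (hC.trans pairCoarse_bot_sets.symm)
  have hL := large_even_pairCoarse_bot
  have hD := discreteOn_even_pairCoarse ⊥
  refine ⟨hL, hD, ⟨_, hL, hD⟩, fun hrigid => ?_⟩
  have heq := hrigid (pairCoarse (Filter.hyperfilter ℕ)) fun _ _ =>
    (linked_pairCoarse_iff fun _ => (Filter.hyperfilter ℕ).exists_infinite_subset_compl_mem).symm
  refine pairEntourage_univ_notMem_pairCoarse Filter.hyperfilter_le_cofinite ?_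
  rw [heq]
  exact pairEntourage_mem_pairCoarse (by simp)
end

section
/- If coarse structures E and E' on a set X are λ-equivalent, then they have the same bounded slowly oscillating functions: sob(X, E) = sob(X, E'). -/
open Set

namespace SobAux

open CoarseStruct

variable {X : Type*}

lemma bounded_mono (C : CoarseStruct X) {A B : Set X} (hAB : A ⊆ B)
    (hB : C.IsBounded B) : C.IsBounded A := by
  obtain ⟨E, hE, x, hx⟩ := hB
  exact ⟨E, hE, x, hAB.trans hx⟩

/-- composition of relations -/
def compSet (E F : Set (X × X)) : Set (X × X) :=
  {p : X × X | ∃ z, (p.1, z) ∈ E ∧ (z, p.2) ∈ F}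

lemma compSet_mem (C : CoarseStruct X) {E F : Set (X × X)}
    (hE : E ∈ C.sets) (hF : F ∈ C.sets) : compSet E F ∈ C.sets :=
  C.comp_mem E hE F hF

lemma ball_mono {E : Set (X × X)} {A B : Set X} (h : A ⊆ B) :
    ball E A ⊆ ball E B := by
  rintro y ⟨a, ha, hay⟩
  exact ⟨a, h ha, hay⟩

lemma ball_compSet {E F : Set (X × X)} {A : Set X} :
    ball (compSet E F) A = ball F (ball E A) := by
  ext y
  constructor
  · rintro ⟨a, ha, z, hz1, hz2⟩
    exact ⟨z, ⟨a, ha, hz1⟩, hz2⟩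
  · rintro ⟨z, ⟨a, ha, hz1⟩, hz2⟩
    exact ⟨a, ha, z, hz1, hz2⟩

lemma bounded_ball (C : CoarseStruct X) {A : Set X} {E : Set (X × X)}
    (hA : C.IsBounded A) (hE : E ∈ C.sets) : C.IsBounded (ball E A) := by
  obtain ⟨F, hF, x, hx⟩ := hA
  refine ⟨compSet F E, compSet_mem C hF hE, x, ?_⟩
  rw [ball_compSet]
  exact ball_mono hx

lemma union_mem (C : CoarseStruct X) {E F : Set (X × X)}
    (hE : E ∈ C.sets) (hF : F ∈ C.sets) : E ∪ F ∈ C.sets := by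
  refine C.subset_mem _ (compSet_mem C hE hF) (E ∪ F) ?_ ?_
  · intro p hp
    exact Or.inl (C.diagonal_subset E hE hp)
  · rintro ⟨x, y⟩ (hp | hp)
    · exact ⟨y, hp, C.diagonal_subset F hF rfl⟩
    · exact ⟨x, C.diagonal_subset E hE rfl, hp⟩

lemma bounded_union (C : CoarseStruct X) {A B : Set X}
    (hA : C.IsBounded A) (hB : C.IsBounded B) : C.IsBounded (A ∪ B) := by
  obtain ⟨E, hE, x, hx⟩ := hA
  obtain ⟨F, hF, y, hy⟩ := hB
  obtain ⟨E₀, hE₀, hxy⟩ := C.cover (x, y)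
  refine ⟨E ∪ compSet E₀ F, union_mem C hE (compSet_mem C hE₀ hF), x, ?_⟩
  rintro w (hw | hw)
  · obtain ⟨a, ha, haw⟩ := hx hw
    exact ⟨a, ha, Or.inl haw⟩
  · obtain ⟨b, hb, hbw⟩ := hy hw
    exact ⟨x, rfl, Or.inr ⟨y, hxy, show (y, w) ∈ F from (show b = y from hb) ▸ hbw⟩⟩

lemma bounded_empty (C : CoarseStruct X) [Nonempty X] : C.IsBounded (∅ : Set X) := by
  obtain ⟨x⟩ := ‹Nonempty X›
  exact ⟨Set.diagonal X, C.diagonal_mem, x, by simp [ball]⟩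

lemma bounded_biUnion (C : CoarseStruct X) [Nonempty X] {ι : Type*}
    (s : Finset ι) (B : ι → Set X) (hB : ∀ i ∈ s, C.IsBounded (B i)) :
    C.IsBounded (⋃ i ∈ s, B i) := by
  classical
  induction s using Finset.induction_on with
  | empty => simpa using bounded_empty C
  | @insert a t hnotmem ih =>
    rw [Finset.set_biUnion_insert]
    exact bounded_union C (hB a (Finset.mem_insert_self a t))
      (ih fun i hi => hB i (Finset.mem_insert_of_mem hi))

lemma linked_empty_iff (C : CoarseStruct X) [Nonempty X] (A : Set X) :
    C.Linked A ∅ ↔ C.IsBounded A := by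
  constructor
  · rintro (⟨hA, _⟩ | ⟨A', B', _, hB'sub, _, hB'nb, _⟩)
    · exact hA
    · exact absurd (bounded_mono C hB'sub (bounded_empty C)) hB'nb
  · intro hA
    exact Or.inl ⟨hA, bounded_empty C⟩

lemma bounded_iff_of_lambdaEquiv {C C' : CoarseStruct X} [Nonempty X]
    (h : LambdaEquiv C C') (A : Set X) : C.IsBounded A ↔ C'.IsBounded A := by
  rw [← linked_empty_iff C A, ← linked_empty_iff C' A]
  exact h A ∅

/-- The λ-invariant reformulation of slow oscillation for bounded functions. -/
def QProp (C : CoarseStruct X) (f : X → ℝ) : Prop :=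
  ∀ a b : ℝ, a < b → C.Linked {x | f x ≤ a} {x | b ≤ f x} →
    C.IsBounded {x | f x ≤ a} ∧ C.IsBounded {x | b ≤ f x}

lemma qProp_iff_of_lambdaEquiv {C C' : CoarseStruct X} [Nonempty X]
    (h : LambdaEquiv C C') (f : X → ℝ) : QProp C f ↔ QProp C' f := by
  constructor <;> intro hq a b hab hl
  · rw [← bounded_iff_of_lambdaEquiv h, ← bounded_iff_of_lambdaEquiv h]
    exact hq a b hab ((h _ _).2 hl)
  · rw [bounded_iff_of_lambdaEquiv h, bounded_iff_of_lambdaEquiv h]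
    exact hq a b hab ((h _ _).1 hl)

lemma so_to_q (C : CoarseStruct X) {f : X → ℝ}
    (hso : C.SlowlyOscillating f) : QProp C f := by
  intro a b hab hl
  rcases hl with ⟨hA, hB⟩ | ⟨A', B', hA'sub, hB'sub, hA'nb, hB'nb, F, hF, hAF, hBF⟩
  · exact ⟨hA, hB⟩
  · exfalso
    set G : Set (X × X) := {p : X × X | (p.2, p.1) ∈ F} with hGdef
    have hG : G ∈ C.sets := C.inv_mem F hF
    obtain ⟨B₀, hB₀, hprop⟩ := hso G hG (b - a) (by linarith)
    have hnotsub : ¬ B' ⊆ B₀ := fun hs => hB'nb (bounded_mono C hs hB₀)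
    obtain ⟨b', hb'B', hb'B₀⟩ := Set.not_subset.1 hnotsub
    obtain ⟨a', ha'A', haF⟩ := hBF hb'B'
    have h1 : a' ∈ ball G {b'} := ⟨b', rfl, haF⟩
    have h2 : b' ∈ ball G {b'} := ⟨b', rfl, C.diagonal_subset F hF rfl⟩
    have h3 := hprop b' hb'B₀ a' h1 b' h2
    have hfa : f a' ≤ a := hA'sub ha'A'
    have hfb : b ≤ f b' := hB'sub hb'B'
    have : f b' - f a' ≤ |f a' - f b'| := by
      rw [abs_sub_comm]; exact le_abs_self _
    linarith

lemma q_to_so (C : CoarseStruct X) [Nonempty X] {f : X → ℝ} {M : ℝ}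
    (hM : ∀ x, |f x| ≤ M) (hq : QProp C f) : C.SlowlyOscillating f := by
  intro E hE ε hε
  by_contra hcon
  push_neg at hcon
  -- hcon : ∀ B, C.IsBounded B → ∃ x ∉ B, ∃ y ∈ ball E {x}, ∃ z ∈ ball E {x}, ε ≤ |f y - f z|
  set Einv : Set (X × X) := {p : X × X | (p.2, p.1) ∈ E} with hEinvdef
  have hEinv : Einv ∈ C.sets := C.inv_mem E hE
  set Pj : ℤ → Prop := fun j => ∀ B : Set X, C.IsBounded B → ∃ x, x ∉ B ∧
    ∃ y z : X, (x, y) ∈ E ∧ (x, z) ∈ E ∧ f y ≤ j * (ε / 2) ∧ j * (ε / 2) + ε / 2 ≤ f z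
    with hPjdef
  have hεhalf : (0 : ℝ) < ε / 2 := by linarith
  have hexj : ∃ j : ℤ, Pj j := by
    by_contra hnoj
    push_neg at hnoj
    simp only [hPjdef, not_forall] at hnoj
    choose Bf hBfb hBfp using hnoj
    push_neg at hBfp
    set lo : ℤ := ⌈(-M) / (ε / 2)⌉ with hlo
    set hi : ℤ := ⌈M / (ε / 2)⌉ with hhi
    have hBstar : C.IsBounded (⋃ j ∈ Finset.Icc lo hi, Bf j) :=
      bounded_biUnion C _ _ (fun j _ => hBfb j)
    obtain ⟨x, hx, y, hy, z, hz, hyz⟩ := hcon _ hBstar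
    have hxy : (x, y) ∈ E := by
      obtain ⟨w, hw, hw2⟩ := hy; exact (show w = x from hw) ▸ hw2
    have hxz : (x, z) ∈ E := by
      obtain ⟨w, hw, hw2⟩ := hz; exact (show w = x from hw) ▸ hw2
    -- order so that f y' ≤ f z'
    obtain ⟨y', z', hxy', hxz', hsep⟩ :
        ∃ y' z', (x, y') ∈ E ∧ (x, z') ∈ E ∧ f y' + ε ≤ f z' := by
      rcases le_total (f y) (f z) with hle | hle
      · refine ⟨y, z, hxy, hxz, ?_⟩
        have : |f y - f z| = f z - f y := by
          rw [abs_sub_comm]; exact abs_of_nonneg (by linarith)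
        linarith [hyz, this ▸ hyz]
      · refine ⟨z, y, hxz, hxy, ?_⟩
        have : |f y - f z| = f y - f z := abs_of_nonneg (by linarith)
        rw [this] at hyz
        linarith
    set j : ℤ := ⌈f y' / (ε / 2)⌉ with hj
    have hja : f y' ≤ j * (ε / 2) := by
      have := Int.le_ceil (f y' / (ε / 2))
      calc f y' = f y' / (ε / 2) * (ε / 2) := by field_simp
        _ ≤ j * (ε / 2) := by
            apply mul_le_mul_of_nonneg_right this (le_of_lt hεhalf)
    have hjb : (j : ℝ) * (ε / 2) < f y' + ε / 2 := by
      have h1 : (j : ℝ) < f y' / (ε / 2) + 1 := Int.ceil_lt_add_one _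
      have h2 : (j : ℝ) * (ε / 2) < (f y' / (ε / 2) + 1) * (ε / 2) :=
        mul_lt_mul_of_pos_right h1 hεhalf
      have h3 : (f y' / (ε / 2) + 1) * (ε / 2) = f y' + ε / 2 := by field_simp
      linarith
    have hjmem : j ∈ Finset.Icc lo hi := by
      have hy'M : -M ≤ f y' ∧ f y' ≤ M := abs_le.1 (hM y')
      rw [Finset.mem_Icc]
      constructor
      · exact Int.ceil_le_ceil (div_le_div_of_nonneg_right hy'M.1 hεhalf.le)
      · exact Int.ceil_le_ceil (div_le_div_of_nonneg_right hy'M.2 hεhalf.le)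
    have hxBj : x ∉ Bf j := fun hmem =>
      hx (Set.mem_biUnion hjmem hmem)
    linarith [hBfp j x hxBj y' z' hxy' hxz' hja]
  obtain ⟨j, hPj⟩ := hexj
  set a : ℝ := j * (ε / 2) with ha
  set b : ℝ := a + ε / 2 with hb
  have hab : a < b := by rw [hb]; linarith
  set A' : Set X := {y | ∃ x z, (x, y) ∈ E ∧ (x, z) ∈ E ∧ f y ≤ a ∧ b ≤ f z} with hA'
  set B' : Set X := {z | ∃ x y, (x, y) ∈ E ∧ (x, z) ∈ E ∧ f y ≤ a ∧ b ≤ f z} with hB'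
  have hA'sub : A' ⊆ {x | f x ≤ a} := by rintro y ⟨x, z, _, _, hy, _⟩; exact hy
  have hB'sub : B' ⊆ {x | b ≤ f x} := by rintro z ⟨x, y, _, _, _, hz⟩; exact hz
  have hA'nb : ¬ C.IsBounded A' := by
    intro hbd
    obtain ⟨x, hx, y, z, h1, h2, h3, h4⟩ := hPj _ (bounded_ball C hbd hEinv)
    exact hx ⟨y, ⟨x, z, h1, h2, h3, h4⟩, h1⟩
  have hB'nb : ¬ C.IsBounded B' := by
    intro hbd
    obtain ⟨x, hx, y, z, h1, h2, h3, h4⟩ := hPj _ (bounded_ball C hbd hEinv)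
    exact hx ⟨z, ⟨x, y, h1, h2, h3, h4⟩, h2⟩
  have hclose : C.Close A' B' := by
    refine ⟨compSet Einv E, compSet_mem C hEinv hE, ?_, ?_⟩
    · rintro y ⟨x, z, h1, h2, h3, h4⟩
      exact ⟨z, ⟨x, y, h1, h2, h3, h4⟩, ⟨x, h2, h1⟩⟩
    · rintro z ⟨x, y, h1, h2, h3, h4⟩
      exact ⟨y, ⟨x, z, h1, h2, h3, h4⟩, ⟨x, h1, h2⟩⟩
  have hlinked : C.Linked {x | f x ≤ a} {x | b ≤ f x} :=
    Or.inr ⟨A', B', hA'sub, hB'sub, hA'nb, hB'nb, hclose⟩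
  exact hA'nb (bounded_mono C hA'sub (hq a b hab hlinked).1)

lemma so_iff_q (C : CoarseStruct X) [Nonempty X] {f : X → ℝ} {M : ℝ}
    (hM : ∀ x, |f x| ≤ M) : C.SlowlyOscillating f ↔ QProp C f :=
  ⟨so_to_q C, q_to_so C hM⟩

lemma not_so_of_isEmpty (C : CoarseStruct X) [IsEmpty X] (f : X → ℝ) :
    ¬ C.SlowlyOscillating f := by
  intro hso
  obtain ⟨B, ⟨E, _, x, _⟩, _⟩ := hso _ C.diagonal_mem 1 one_pos
  exact isEmptyElim x

end SobAux

/-- λ-equivalent coarse structures have the same bounded slowly oscillating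
functions. -/
theorem lambdaEquiv_sob_eq {X : Type*} (C C' : CoarseStruct X)
    (h : CoarseStruct.LambdaEquiv C C') :
    ∀ f : X → ℝ,
      ((∃ M : ℝ, ∀ x : X, |f x| ≤ M) ∧ C.SlowlyOscillating f) ↔
      ((∃ M : ℝ, ∀ x : X, |f x| ≤ M) ∧ C'.SlowlyOscillating f) := by
  intro f
  rcases isEmpty_or_nonempty X with hX | hX
  · constructor
    · rintro ⟨-, hso⟩
      exact absurd hso (SobAux.not_so_of_isEmpty C f)
    · rintro ⟨-, hso⟩
      exact absurd hso (SobAux.not_so_of_isEmpty C' f)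
  · constructor
    · rintro ⟨⟨M, hM⟩, hso⟩
      refine ⟨⟨M, hM⟩, ?_⟩
      rw [SobAux.so_iff_q C' hM, ← SobAux.qProp_iff_of_lambdaEquiv h f]
      rw [SobAux.so_iff_q C hM] at hso
      exact hso
    · rintro ⟨⟨M, hM⟩, hso⟩
      refine ⟨⟨M, hM⟩, ?_⟩
      rw [SobAux.so_iff_q C hM, SobAux.qProp_iff_of_lambdaEquiv h f]
      rw [SobAux.so_iff_q C' hM] at hso
      exact hso
end
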